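/- For n ≥ 3 and m ≥ 1, κ₃(P_n ∘ K_m) = m, where P_n is the path on n vertices, K_m the complete graph on m vertices, and ∘ the lexicographic product. -/

import Mathlib

open SimpleGraph

/-- An `S`-Steiner tree in `G`: a subgraph that is a tree and contains `S`. -/
def IsSteinerTree {V : Type*} (G : SimpleGraph V) (S : Set V) (T : G.Subgraph) : Prop :=
  T.coe.IsTree ∧ S ⊆ T.verts

/-- Two `S`-trees are internally disjoint: edge-disjoint and meeting exactly in `S`. -/
def IntDisjoint {V : Type*} (S : Set V) {G : SimpleGraph V} (T₁ T₂ : G.Subgraph) : Prop :=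
  T₁.verts ∩ T₂.verts = S ∧ ∀ u v, ¬ (T₁.Adj u v ∧ T₂.Adj u v)

/-- `κ(S)`: the maximum number of pairwise internally disjoint `S`-Steiner trees. -/
noncomputable def steinerConn {V : Type*} (G : SimpleGraph V) (S : Set V) : ℕ :=
  sSup {n | ∃ f : Fin n → G.Subgraph,
    (∀ i, IsSteinerTree G S (f i)) ∧ ∀ i j, i ≠ j → IntDisjoint S (f i) (f j)}

/-- The generalized `k`-connectivity `κ_k(G)`. -/
noncomputable def genConn {V : Type*} (G : SimpleGraph V) (k : ℕ) : ℕ :=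
  sInf {c | ∃ S : Set V, S.ncard = k ∧ steinerConn G S = c}

/-- `G` is `k`-connected: more than `k` vertices, and removing fewer than `k`
vertices leaves it connected. -/
def KConnected {V : Type*} (G : SimpleGraph V) (k : ℕ) : Prop :=
  k < Nat.card V ∧ ∀ s : Set V, s.Finite → s.ncard < k → (G.induce sᶜ).Connected

/-- The vertex connectivity `κ(G)`. -/
noncomputable def vconn {V : Type*} (G : SimpleGraph V) : ℕ :=
  sSup {k | KConnected G k}

/-- The lexicographic product `G ∘ H`. -/
def lexProd {V W : Type*} (G : SimpleGraph V) (H : SimpleGraph W) : SimpleGraph (V × W) where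
  Adj a b := G.Adj a.1 b.1 ∨ (a.1 = b.1 ∧ H.Adj a.2 b.2)
  symm := by
    refine ⟨?_⟩
    intro a b h
    rcases h with h | ⟨h1, h2⟩
    · exact Or.inl h.symm
    · exact Or.inr ⟨h1.symm, h2.symm⟩
  loopless := by
    refine ⟨?_⟩
    intro a h
    rcases h with h | ⟨_, h2⟩
    · exact G.irrefl h
    · exact H.irrefl h2

/-- The star `K_{1,m}` on `m + 1` vertices: center `none`, leaves `some i`. -/
def starGraph (m : ℕ) : SimpleGraph (Option (Fin m)) where
  Adj u v := u ≠ v ∧ (u = none ∨ v = none)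
  symm := by refine ⟨?_⟩; intro u v ⟨h1, h2⟩; exact ⟨h1.symm, h2.symm⟩
  loopless := by refine ⟨?_⟩; intro u ⟨h1, _⟩; exact h1 rfl

/-!
Lower bound: for terminals `S` and each `x : Fin m`, the copy `P_n × {x}` of the path together
with one pendant edge from every terminal outside it is an `S`-Steiner tree `T_x`. A terminal
`s` is attached at `(s.1, x)`, or at the next vertex along the path when `(s.1, x)` is itself a
terminal. Distinct copies are vertex-disjoint, and an edge of `T_x` and `T_y` would join two
terminals each attached to the other, which puts two terminals in each of the copies `x` and `y`:
four terminals in all.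

Upper bound: for `m ≥ 2`, the terminals `(0,0)` and `(2,0)` are separated by the `m` vertices of
layer `1`, none of them a terminal, and each tree of a packing must use one of them. For `m = 1`,
the terminal `(0,0)` has a single neighbour, and the trees of a packing are edge-disjoint.
-/

namespace SimpleGraph

variable {V : Type*} {G : SimpleGraph V}

theorem isAcyclic_of_rank (ρ : V → ℕ) (hne : ∀ ⦃u v⦄, G.Adj u v → ρ u ≠ ρ v)
    (hlower : ∀ ⦃u v w⦄, G.Adj u v → G.Adj u w → ρ v < ρ u → ρ w < ρ u → v = w) :
    G.IsAcyclic := by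
  classical
  intro v c hc
  obtain ⟨u, hu, hmax⟩ := c.support.toFinset.exists_max_image ρ ⟨v, by simp⟩
  rw [List.mem_toFinset] at hu
  set c' := c.rotate u hu
  have hc' : c'.IsCycle := hc.rotate hu
  -- Rotated to a vertex of maximal rank, the cycle leaves and re-enters it from below.
  have hlt : ∀ k, G.Adj u (c'.getVert k) → ρ (c'.getVert k) < ρ u := fun k hk =>
    (hmax _ (by rw [List.mem_toFinset, ← c.mem_support_rotate_iff u hu]
                exact c'.getVert_mem_support k)).lt_of_ne (hne hk).symm
  have hsnd := c'.adj_snd hc'.not_nil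
  have hpen := (c'.adj_penultimate hc'.not_nil).symm
  exact hc'.snd_ne_penultimate (hlower hsnd hpen (hlt _ hsnd) (hlt _ hpen))

theorem Walk.exists_mem_support_fst_val_eq {n : ℕ} {W : Type*} {H : SimpleGraph W}
    {u w : Fin n × W} (p : (lexProd (pathGraph n) H).Walk u w) {j : ℕ}
    (hu : u.1.val ≤ j) (hw : j ≤ w.1.val) : ∃ z ∈ p.support, z.1.val = j := by
  induction p with
  | nil => exact ⟨_, List.mem_singleton_self _, by omega⟩
  | @cons u v w h q ih =>
    by_cases huj : u.1.val = j
    · exact ⟨u, (q.cons h).start_mem_support, huj⟩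
    · have hv : v.1.val ≤ j := by
        rcases h with h | ⟨h, -⟩
        · rw [pathGraph_adj] at h
          omega
        · exact h ▸ hu
      obtain ⟨z, hz, hzj⟩ := ih hv hw
      exact ⟨z, List.mem_cons_of_mem _ hz, hzj⟩

end SimpleGraph

theorem Set.four_le_ncard {α : Type*} {s : Set α} {a b c d : α}
    (ha : a ∈ s) (hb : b ∈ s) (hc : c ∈ s) (hd : d ∈ s) (hab : a ≠ b) (hac : a ≠ c)
    (had : a ≠ d) (hbc : b ≠ c) (hbd : b ≠ d) (hcd : c ≠ d)
    (hs : s.Finite := by toFinite_tac) :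
    4 ≤ s.ncard := by
  have h4 : ({a, b, c, d} : Set α).ncard = 4 := by
    rw [Set.ncard_insert_of_notMem (by simp [*]), Set.ncard_insert_of_notMem (by simp [*]),
      Set.ncard_pair hcd]
  exact h4 ▸ Set.ncard_le_ncard (by simp [Set.insert_subset_iff, *]) hs

def IsSteinerPacking {V : Type*} (G : SimpleGraph V) (S : Set V) {k : ℕ}
    (f : Fin k → G.Subgraph) : Prop :=
  (∀ i, IsSteinerTree G S (f i)) ∧ ∀ i j, i ≠ j → IntDisjoint S (f i) (f j)

section SteinerPacking

variable {V : Type*} {G : SimpleGraph V} {S : Set V}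

theorem IsSteinerTree.exists_adj {T : G.Subgraph} (hT : IsSteinerTree G S T) {v w : V}
    (hv : v ∈ S) (hw : w ∈ S) (hvw : v ≠ w) : ∃ u, T.Adj v u := by
  obtain ⟨hT, hST⟩ := hT
  obtain ⟨p⟩ := hT.connected.preconnected ⟨v, hST hv⟩ ⟨w, hST hw⟩
  obtain ⟨u, hu, -⟩ := Walk.exists_eq_cons_of_ne (by simpa using hvw) p
  exact ⟨u, hu⟩

theorem IsSteinerTree.exists_mem_verts_of_separates {T : G.Subgraph}
    (hT : IsSteinerTree G S T) {a b : V} (ha : a ∈ S) (hb : b ∈ S) {C : Set V}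
    (hC : ∀ p : G.Walk a b, ∃ c ∈ p.support, c ∈ C) : ∃ c ∈ C, c ∈ T.verts := by
  obtain ⟨hT, hST⟩ := hT
  have hmap : ∀ {x y : T.verts} (q : T.coe.Walk x y), ∀ c ∈ (q.map T.hom).support,
      c ∈ T.verts := by
    intro x y q c hc
    rw [Walk.support_map, List.mem_map] at hc
    obtain ⟨c', -, rfl⟩ := hc
    exact c'.2
  obtain ⟨p⟩ := hT.connected.preconnected ⟨a, hST ha⟩ ⟨b, hST hb⟩
  obtain ⟨c, hc, hcC⟩ := hC (p.map T.hom)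
  exact ⟨c, hcC, hmap p c hc⟩

namespace IsSteinerPacking

variable {k : ℕ} {f : Fin k → G.Subgraph}

theorem card_le_of_adj_mem (hf : IsSteinerPacking G S f) {v w : V} (hv : v ∈ S) (hw : w ∈ S)
    (hvw : v ≠ w) (N : Finset V) (hN : ∀ u, G.Adj v u → u ∈ N) : k ≤ N.card := by
  choose u hu using fun i => (hf.1 i).exists_adj hv hw hvw
  have hinj : Function.Injective u := fun i j hij => by
    by_contra hne
    exact (hf.2 i j hne).2 v (u i) ⟨hu i, hij ▸ hu j⟩
  simpa using Finset.card_le_card_of_injOn (s := Finset.univ) u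
    (fun i _ => hN _ ((f i).adj_sub (hu i))) hinj.injOn

theorem card_le_of_separates (hf : IsSteinerPacking G S f) {a b : V} (ha : a ∈ S)
    (hb : b ∈ S) (C : Finset V) (hCS : ∀ c ∈ C, c ∉ S)
    (hC : ∀ p : G.Walk a b, ∃ c ∈ p.support, c ∈ C) : k ≤ C.card := by
  choose c hcC hcT using fun i => (hf.1 i).exists_mem_verts_of_separates ha hb hC
  have hinj : Function.Injective c := fun i j hij => by
    by_contra hne
    have hcS : c i ∈ S := (hf.2 i j hne).1 ▸ ⟨hcT i, hij ▸ hcT j⟩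
    exact hCS _ (hcC i) hcS
  simpa using Finset.card_le_card_of_injOn (s := Finset.univ) c (fun i _ => hcC i) hinj.injOn

end IsSteinerPacking

theorem steinerConn_le {k : ℕ}
    (h : ∀ n (f : Fin n → G.Subgraph), IsSteinerPacking G S f → n ≤ k) :
    steinerConn G S ≤ k :=
  csSup_le ⟨0, Fin.elim0, fun i => i.elim0, fun i => i.elim0⟩ fun n ⟨f, hf⟩ => h n f hf

theorem le_steinerConn [Fintype V] (hS : 1 < S.ncard) {k : ℕ} {f : Fin k → G.Subgraph}
    (hf : IsSteinerPacking G S f) : k ≤ steinerConn G S := by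
  obtain ⟨v, hv, w, hw, hvw⟩ := (Set.one_lt_ncard).mp hS
  refine le_csSup ⟨(Finset.univ : Finset V).card, ?_⟩ ⟨f, hf⟩
  rintro n ⟨g, hg⟩
  exact IsSteinerPacking.card_le_of_adj_mem hg hv hw hvw _ fun u _ => Finset.mem_univ u

theorem genConn_eq_of_forall_le {k c : ℕ}
    (hle : ∀ S : Set V, S.ncard = k → c ≤ steinerConn G S)
    (hS : ∃ S : Set V, S.ncard = k ∧ steinerConn G S ≤ c) : genConn G k = c := by
  obtain ⟨S, hSk, hSc⟩ := hS
  have hc : c ∈ {c | ∃ S : Set V, S.ncard = k ∧ steinerConn G S = c} :=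
    ⟨S, hSk, hSc.antisymm (hle S hSk)⟩
  exact le_antisymm (Nat.sInf_le hc)
    (le_csInf ⟨c, hc⟩ fun _ ⟨T, hT, hTc⟩ => hTc ▸ hle T hT)

end SteinerPacking

namespace LexProdPathComplete

variable {n : ℕ} {W : Type*}

def pathNbr (i : Fin n) : Fin n :=
  if h : i.val + 1 < n then ⟨i.val + 1, h⟩ else ⟨i.val - 1, by omega⟩

theorem pathGraph_adj_pathNbr (hn : 2 ≤ n) (i : Fin n) : (pathGraph n).Adj i (pathNbr i) := by
  rw [pathGraph_adj, pathNbr]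
  split_ifs with h
  · exact Or.inl rfl
  · exact Or.inr (by simp only; omega)

open Classical in
noncomputable def attachPoint (S : Set (Fin n × W)) (x : W) (s : Fin n × W) : Fin n × W :=
  if (s.1, x) ∈ S then (pathNbr s.1, x) else (s.1, x)

variable {S : Set (Fin n × W)} {x : W}

@[simp] theorem attachPoint_snd (s : Fin n × W) : (attachPoint S x s).2 = x := by
  unfold attachPoint
  split_ifs <;> rfl

theorem adj_attachPoint (hn : 2 ≤ n) {s : Fin n × W} (hs : s.2 ≠ x) :
    (lexProd (pathGraph n) ⊤).Adj s (attachPoint S x s) := by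
  unfold attachPoint
  split_ifs
  · exact Or.inl (pathGraph_adj_pathNbr hn s.1)
  · exact Or.inr ⟨rfl, hs⟩

theorem mem_of_attachPoint_mem {s : Fin n × W} (h : attachPoint S x s ∈ S) :
    (s.1, x) ∈ S ∧ (pathNbr s.1, x) ∈ S := by
  unfold attachPoint at h
  split_ifs at h with hs
  · exact ⟨hs, h⟩
  · exact absurd h hs

variable (S x) in
noncomputable def columnTree (hn : 2 ≤ n) :
    (lexProd (pathGraph n) (⊤ : SimpleGraph W)).Subgraph where
  verts := {v | v.2 = x} ∪ S
  Adj u v := (u.2 = x ∧ v.2 = x ∧ (pathGraph n).Adj u.1 v.1) ∨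
    (u ∈ S ∧ u.2 ≠ x ∧ v = attachPoint S x u) ∨
    (v ∈ S ∧ v.2 ≠ x ∧ u = attachPoint S x v)
  adj_sub := by
    rintro u v (⟨-, -, h⟩ | ⟨-, hu, rfl⟩ | ⟨-, hv, rfl⟩)
    · exact Or.inl h
    · exact adj_attachPoint hn hu
    · exact (adj_attachPoint hn hv).symm
  edge_vert := by
    rintro u v (⟨hu, -⟩ | ⟨hu, -⟩ | ⟨-, -, rfl⟩)
    · exact Or.inl hu
    · exact Or.inr hu
    · exact Or.inl (attachPoint_snd v)
  symm := ⟨by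
    rintro u v (⟨hu, hv, h⟩ | h | h)
    · exact Or.inl ⟨hv, hu, h.symm⟩
    · exact Or.inr (Or.inr h)
    · exact Or.inr (Or.inl h)⟩

variable {hn : 2 ≤ n} {u v w : Fin n × W}

theorem columnTree_adj_snd (h : (columnTree S x hn).Adj u v) : u.2 = x ∨ v.2 = x := by
  rcases h with ⟨hu, -⟩ | ⟨-, -, rfl⟩ | ⟨-, -, rfl⟩ <;> simp [*]

theorem columnTree_adj_of_snd_ne (h : (columnTree S x hn).Adj u v) (hu : u.2 ≠ x) :
    u ∈ S ∧ v = attachPoint S x u := by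
  rcases h with ⟨hu', -⟩ | ⟨huS, -, rfl⟩ | ⟨-, -, rfl⟩
  · exact absurd hu' hu
  · exact ⟨huS, rfl⟩
  · exact absurd (attachPoint_snd v) hu

theorem columnTree_adj_of_snd_eq (h : (columnTree S x hn).Adj u v) (hu : u.2 = x)
    (hv : v.2 = x) : (pathGraph n).Adj u.1 v.1 := by
  rcases h with ⟨-, -, h⟩ | ⟨-, hu', -⟩ | ⟨-, hv', -⟩
  · exact h
  · exact absurd hu hu'
  · exact absurd hv hv'

theorem columnTree_connected : (columnTree S x hn).coe.Connected := by
  set T := columnTree S x hn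
  let col : pathGraph n →g T.coe :=
    ⟨fun i => ⟨(i, x), Or.inl rfl⟩, fun h => Or.inl ⟨rfl, rfl, h⟩⟩
  let root : T.verts := col ⟨0, by omega⟩
  have hcol : ∀ v : T.verts, v.1.2 = x → T.coe.Reachable v root := by
    rintro ⟨⟨i, y⟩, hv⟩ (rfl : y = x)
    exact (pathGraph_preconnected n i _).map col
  have hroot : ∀ v : T.verts, T.coe.Reachable v root := by
    rintro ⟨v, hv⟩
    by_cases hvx : v.2 = x
    · exact hcol _ hvx
    · have hadj : T.coe.Adj ⟨v, hv⟩ ⟨attachPoint S x v, Or.inl (attachPoint_snd v)⟩ :=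
        Or.inr (Or.inl ⟨hv.resolve_left hvx, hvx, rfl⟩)
      exact hadj.reachable.trans (hcol _ (attachPoint_snd v))
  have : Nonempty T.verts := ⟨root⟩
  exact ⟨fun u v => (hroot u).trans (hroot v).symm⟩

variable (x) in
open Classical in
noncomputable def columnRank (v : Fin n × W) : ℕ :=
  if v.2 = x then v.1 else n

theorem columnRank_of_snd_eq (h : v.2 = x) : columnRank x v = v.1 := if_pos h

theorem columnRank_of_snd_ne (h : v.2 ≠ x) : columnRank x v = n := if_neg h

theorem columnRank_ne_of_adj (h : (columnTree S x hn).Adj u v) :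
    columnRank x u ≠ columnRank x v := by
  by_cases hu : u.2 = x <;> by_cases hv : v.2 = x
  · have := columnTree_adj_of_snd_eq h hu hv
    rw [pathGraph_adj] at this
    rw [columnRank_of_snd_eq hu, columnRank_of_snd_eq hv]
    omega
  · rw [columnRank_of_snd_eq hu, columnRank_of_snd_ne hv]
    exact u.1.isLt.ne
  · rw [columnRank_of_snd_ne hu, columnRank_of_snd_eq hv]
    exact v.1.isLt.ne'
  · exact absurd (columnTree_adj_snd h) (by tauto)

theorem eq_of_adj_of_columnRank_lt (huv : (columnTree S x hn).Adj u v)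
    (huw : (columnTree S x hn).Adj u w) (hv : columnRank x v < columnRank x u)
    (hw : columnRank x w < columnRank x u) : v = w := by
  by_cases hu : u.2 = x
  · have hpred : ∀ v, (columnTree S x hn).Adj u v → columnRank x v < columnRank x u →
        v.2 = x ∧ v.1.val + 1 = u.1.val := fun v huv hv => by
      rw [columnRank_of_snd_eq hu] at hv
      have hvx : v.2 = x := by
        by_contra hvx
        rw [columnRank_of_snd_ne hvx] at hv
        exact u.1.isLt.not_gt hv
      have := columnTree_adj_of_snd_eq huv hu hvx
      rw [pathGraph_adj] at this
      rw [columnRank_of_snd_eq hvx] at hv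
      exact ⟨hvx, by omega⟩
    obtain ⟨hvx, hv1⟩ := hpred v huv hv
    obtain ⟨hwx, hw1⟩ := hpred w huw hw
    exact Prod.ext (Fin.ext (by omega)) (hvx.trans hwx.symm)
  · exact (columnTree_adj_of_snd_ne huv hu).2.trans (columnTree_adj_of_snd_ne huw hu).2.symm

theorem columnTree_isAcyclic : (columnTree S x hn).coe.IsAcyclic :=
  isAcyclic_of_rank (fun v => columnRank x v.1) (fun _ _ h => columnRank_ne_of_adj (hn := hn) h)
    fun _ _ _ huv huw hv hw => Subtype.ext (eq_of_adj_of_columnRank_lt (hn := hn) huv huw hv hw)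

theorem isSteinerTree_columnTree : IsSteinerTree _ S (columnTree S x hn) :=
  ⟨⟨columnTree_connected, columnTree_isAcyclic⟩, Set.subset_union_right⟩

theorem intDisjoint_columnTree (hS : S.ncard = 3) {x y : W} (hxy : x ≠ y) :
    IntDisjoint S (columnTree S x hn) (columnTree S y hn) := by
  refine ⟨?_, fun u v ⟨hx, hy⟩ => ?_⟩
  · ext v
    refine ⟨?_, fun h => ⟨Or.inr h, Or.inr h⟩⟩
    rintro ⟨hvx | hvS, hvy | hvS⟩
    · exact absurd (hvx.symm.trans hvy) hxy
    all_goals assumption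
  have key : ∀ {u v}, (columnTree S x hn).Adj u v → (columnTree S y hn).Adj u v →
      u.2 = x → False := by
    intro u v hx hy hux
    obtain ⟨huS, rfl⟩ := columnTree_adj_of_snd_ne hy (hux ▸ hxy)
    obtain ⟨hvS, hu⟩ := columnTree_adj_of_snd_ne hx.symm (by simpa using hxy.symm)
    obtain ⟨h₁, h₂⟩ := mem_of_attachPoint_mem (hu ▸ huS)
    obtain ⟨h₃, h₄⟩ := mem_of_attachPoint_mem hvS
    have hnbr := fun i => (pathGraph_adj_pathNbr hn i).ne
    refine absurd (Set.four_le_ncard h₁ h₂ h₃ h₄ ?_ ?_ ?_ ?_ ?_ ?_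
      (Set.finite_of_ncard_ne_zero (by omega))) (by omega)
    all_goals simp [Prod.ext_iff, hxy, hnbr]
  rcases columnTree_adj_snd hx with h | h
  · exact key hx hy h
  · exact key hx.symm hy.symm h

end LexProdPathComplete

open LexProdPathComplete in
theorem le_steinerConn_lexProd_pathGraph_top {n m : ℕ} (hn : 2 ≤ n)
    {S : Set (Fin n × Fin m)} (hS : S.ncard = 3) :
    m ≤ steinerConn (lexProd (pathGraph n) (⊤ : SimpleGraph (Fin m))) S :=
  le_steinerConn (by omega) (f := fun x => columnTree S x hn)
    ⟨fun _ => isSteinerTree_columnTree, fun _ _ => intDisjoint_columnTree hS⟩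

theorem steinerConn_lexProd_pathGraph_top_succ_succ_le (n m : ℕ) :
    steinerConn (lexProd (pathGraph (n + 3)) (⊤ : SimpleGraph (Fin (m + 2))))
      {(0, 0), (2, 0), (2, 1)} ≤ m + 2 := by
  have h2 : 2 % (n + 3) = 2 := Nat.mod_eq_of_lt (by omega)
  let layer := Finset.univ.map (Function.Embedding.sectR (1 : Fin (n + 3)) (Fin (m + 2)))
  have hlayer : ∀ z, z ∈ layer ↔ z.1 = 1 := fun z => by
    simp only [layer, Finset.mem_map, Finset.mem_univ, true_and, Function.Embedding.sectR_apply]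
    exact ⟨fun ⟨y, hy⟩ => hy ▸ rfl, fun h => ⟨z.2, Prod.ext h.symm rfl⟩⟩
  refine steinerConn_le fun k f hf => ?_
  simpa only [layer, Finset.card_map, Finset.card_univ, Fintype.card_fin] using
    hf.card_le_of_separates (a := (0, 0)) (b := (2, 0)) (by simp) (by simp) layer
      (fun z hz hzS => by
        rw [hlayer] at hz
        rcases hzS with rfl | rfl | rfl <;> simp [Fin.ext_iff, h2] at hz)
      fun p => by
        obtain ⟨z, hz, hz1⟩ := p.exists_mem_support_fst_val_eq (j := 1) (by simp) (by simp [h2])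
        exact ⟨z, hz, (hlayer z).2 (Fin.ext hz1)⟩

theorem steinerConn_lexProd_pathGraph_top_one_le (n : ℕ) :
    steinerConn (lexProd (pathGraph (n + 3)) (⊤ : SimpleGraph (Fin 1)))
      {(0, 0), (1, 0), (2, 0)} ≤ 1 := by
  refine steinerConn_le fun k f hf => ?_
  simpa using hf.card_le_of_adj_mem (v := (0, 0)) (w := (1, 0)) (by simp) (by simp)
    (by simp [Prod.ext_iff]) {(1, 0)} fun u hu => by
      rcases hu with hu | ⟨-, hu⟩
      · rw [pathGraph_adj] at hu
        simp only [Fin.val_zero, zero_add] at hu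
        simp [Prod.ext_iff, Fin.ext_iff]
        omega
      · exact absurd (Subsingleton.elim _ _) hu.ne

/-- `κ₃(P_n ∘ K_m) = m` for `n ≥ 3`, `m ≥ 1`. -/
theorem genConn_three_path_lexProd_complete (n m : ℕ) (hn : 3 ≤ n) (hm : 1 ≤ m) :
    genConn (lexProd (pathGraph n) (⊤ : SimpleGraph (Fin m))) 3 = m := by
  refine genConn_eq_of_forall_le
    (fun S hS => le_steinerConn_lexProd_pathGraph_top (by omega) hS) ?_
  obtain ⟨n, rfl⟩ := Nat.exists_eq_add_of_le' hn
  obtain ⟨m, rfl⟩ := Nat.exists_eq_add_of_le' hm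
  have h2 : 2 % (n + 3) = 2 := Nat.mod_eq_of_lt (by omega)
  rcases m with _ | m
  · refine ⟨_, Set.ncard_eq_three.mpr ⟨_, _, _, ?_, ?_, ?_, rfl⟩,
      steinerConn_lexProd_pathGraph_top_one_le n⟩ <;> simp [Prod.ext_iff, Fin.ext_iff, h2]
  · refine ⟨_, Set.ncard_eq_three.mpr ⟨_, _, _, ?_, ?_, ?_, rfl⟩,
      steinerConn_lexProd_pathGraph_top_succ_succ_le n m⟩ <;>
      simp [Prod.ext_iff, Fin.ext_iff, h2]
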